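/- Let g and h be the morphisms from words over {a,b,c,d} to words over {0,1} defined by g(a)=00, g(b)=01, g(c)=10, g(d)=11 and h(a)=h(b)=0, h(c)=h(d)=1. Then h(g⁻¹(PRIMEPALSTAR)) = U, where PRIMEPALSTAR is the language of prime palstars over {0,1} and U is the language of nonempty unbordered words over {0,1}. -/

import Mathlib

open scoped Computability

/-- `PAL` is the set of nonempty even-length palindromes `x ++ xᴿ`. -/
def PAL (α : Type) : Language α := {w | ∃ x : List α, x ≠ [] ∧ w = x ++ x.reverse}

/-- `PALSTAR` is the Kleene star of `PAL`. -/
def PALSTAR (α : Type) : Language α := (PAL α)∗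

/-- A prime palstar: a nonempty palstar that is not a product of two nonempty palstars. -/
def IsPrimePalstar {α : Type} (w : List α) : Prop :=
  w ∈ PALSTAR α ∧ w ≠ [] ∧
    ¬ ∃ u v : List α, u ∈ PALSTAR α ∧ v ∈ PALSTAR α ∧ u ≠ [] ∧ v ≠ [] ∧ w = u ++ v

/-- A word is bordered if it has the form `x ++ y ++ x` with `x` nonempty. -/
def Bordered {α : Type} (w : List α) : Prop := ∃ x y : List α, x ≠ [] ∧ w = x ++ y ++ x

/-- The morphism `g` on `{a,b,c,d} = Fin 4`: `g(a)=00, g(b)=01, g(c)=10, g(d)=11`. -/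
def g : List (Fin 4) → List (Fin 2) :=
  fun w => w.flatMap ![[0, 0], [0, 1], [1, 0], [1, 1]]

/-- The morphism `h` on `{a,b,c,d} = Fin 4`: `h(a)=h(b)=0, h(c)=h(d)=1`. -/
def h : List (Fin 4) → List (Fin 2) :=
  fun w => w.map ![0, 0, 1, 1]

namespace PPSAux

variable {α : Type}

/-- Interleaving of two lists. -/
def il : List α → List α → List α
  | a :: v, b :: u => a :: b :: il v u
  | _, _ => []

@[simp] lemma il_nil_left (u : List α) : il [] u = [] := by cases u <;> rfl

@[simp] lemma il_cons (a b : α) (v u : List α) :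
    il (a :: v) (b :: u) = a :: b :: il v u := rfl

lemma il_length (v : List α) : ∀ u : List α, v.length = u.length →
    (il v u).length = v.length + u.length := by
  induction v with
  | nil => intro u hu; simp at hu ⊢; omega
  | cons a v ih =>
    intro u hu
    cases u with
    | nil => simp at hu
    | cons b u =>
      have : v.length = u.length := by simpa using hu
      simp [ih u this]; omega

lemma il_append (v : List α) : ∀ (u v' u' : List α), v.length = u.length →
    il (v ++ v') (u ++ u') = il v u ++ il v' u' := by
  induction v with
  | nil =>
    intro u v' u' hu
    have : u = [] := by simpa using (List.length_eq_zero_iff.mp hu.symm)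
    subst this; simp
  | cons a v ih =>
    intro u v' u' hu
    cases u with
    | nil => simp at hu
    | cons b u =>
      have : v.length = u.length := by simpa using hu
      simp [ih u v' u' this]

lemma il_reverse (v : List α) : ∀ u : List α, v.length = u.length →
    (il v u).reverse = il u.reverse v.reverse := by
  induction v with
  | nil =>
    intro u hu
    have : u = [] := by simpa using (List.length_eq_zero_iff.mp hu.symm)
    subst this; simp
  | cons a v ih =>
    intro u hu
    cases u with
    | nil => simp at hu
    | cons b u =>
      have hl : v.length = u.length := by simpa using hu
      have h2 : u.reverse.length = v.reverse.length := by simp [hl]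
      calc (il (a :: v) (b :: u)).reverse
          = (il v u).reverse ++ [b, a] := by simp
        _ = il u.reverse v.reverse ++ il [b] [a] := by rw [ih u hl]; rfl
        _ = il (u.reverse ++ [b]) (v.reverse ++ [a]) := (il_append _ _ _ _ h2).symm
        _ = il (b :: u).reverse (a :: v).reverse := by simp

lemma il_inj (v : List α) : ∀ u v' u' : List α, v.length = u.length →
    v'.length = u'.length → il v u = il v' u' → v = v' ∧ u = u' := by
  induction v with
  | nil =>
    intro u v' u' hu hu' he
    have hu0 : u = [] := by simpa using (List.length_eq_zero_iff.mp hu.symm)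
    subst hu0
    cases v' with
    | nil =>
      have : u' = [] := by simpa using (List.length_eq_zero_iff.mp hu'.symm)
      subst this; exact ⟨rfl, rfl⟩
    | cons a v' =>
      cases u' with
      | nil => simp at hu'
      | cons b u' => simp at he
  | cons a v ih =>
    intro u v' u' hu hu' he
    cases u with
    | nil => simp at hu
    | cons b u =>
      cases v' with
      | nil =>
        have : u' = [] := by simpa using (List.length_eq_zero_iff.mp hu'.symm)
        subst this; simp at he
      | cons a' v' =>
        cases u' with
        | nil => simp at hu'
        | cons b' u' =>
          simp only [il_cons, List.cons.injEq] at he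
          obtain ⟨h1, h2, h3⟩ := he
          have hl : v.length = u.length := by simpa using hu
          have hl' : v'.length = u'.length := by simpa using hu'
          obtain ⟨e1, e2⟩ := ih u v' u' hl hl' h3
          exact ⟨by rw [h1, e1], by rw [h2, e2]⟩

lemma mem_PAL_iff {s : List α} :
    s ∈ PAL α ↔ s ≠ [] ∧ 2 ∣ s.length ∧ s.reverse = s := by
  constructor
  · rintro ⟨x, hx, rfl⟩
    refine ⟨by simp [hx], ⟨x.length, by simp; omega⟩, by simp⟩
  · rintro ⟨h1, ⟨k, hk⟩, h3⟩
    have hk1 : 1 ≤ k := by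
      rcases Nat.eq_zero_or_pos k with h | h
      · exfalso; apply h1; apply List.length_eq_zero_iff.mp; omega
      · exact h
    refine ⟨s.take k, ?_, ?_⟩
    · intro hcon
      have := congrArg List.length hcon
      simp at this
      rcases this with h | h
      · omega
      · exact h1 h
    · have hdrop : s.drop k = (s.take k).reverse := by
        rw [List.reverse_take, h3]
        congr 1
        omega
      conv_lhs => rw [← List.take_append_drop k s]
      rw [hdrop]

lemma pal_mem_palstar {p : List α} (hp : p ∈ PAL α) : p ∈ PALSTAR α := by
  rw [PALSTAR, Language.mem_kstar]
  exact ⟨[p], by simp, by simpa using hp⟩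

lemma palstar_append {p q : List α} (hp : p ∈ PALSTAR α) (hq : q ∈ PALSTAR α) :
    p ++ q ∈ PALSTAR α := by
  rw [PALSTAR, Language.mem_kstar] at hp hq ⊢
  obtain ⟨L1, rfl, h1⟩ := hp
  obtain ⟨L2, rfl, h2⟩ := hq
  refine ⟨L1 ++ L2, by simp, ?_⟩
  intro y hy
  rcases List.mem_append.mp hy with hy | hy
  · exact h1 y hy
  · exact h2 y hy

lemma palstar_first {p : List α} (hp : p ∈ PALSTAR α) (hne : p ≠ []) :
    ∃ P r, P ∈ PAL α ∧ P ≠ [] ∧ r ∈ PALSTAR α ∧ p = P ++ r := by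
  rw [PALSTAR, Language.mem_kstar_iff_exists_nonempty] at hp
  obtain ⟨S, rfl, hS⟩ := hp
  cases S with
  | nil => simp at hne
  | cons P S =>
    refine ⟨P, S.flatten, (hS P (by simp)).1, (hS P (by simp)).2, ?_, by simp⟩
    rw [PALSTAR, Language.mem_kstar]
    exact ⟨S, rfl, fun y hy => (hS y (by simp [hy])).1⟩

lemma il_pal {v : List α} (hv : v ≠ []) : il v v.reverse ∈ PAL α := by
  rw [mem_PAL_iff]
  have hl : v.length = v.reverse.length := by simp
  refine ⟨?_, ⟨v.length, by rw [il_length v v.reverse hl]; simp; omega⟩, ?_⟩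
  · intro hcon
    have := congrArg List.length hcon
    rw [il_length v v.reverse hl] at this
    simp at this
    exact hv this
  · rw [il_reverse v v.reverse hl, List.reverse_reverse]

lemma bordered_of_prefix_suffix :
    ∀ (n : ℕ) (x v : List α), x.length ≤ n → x ≠ [] → x.length < v.length →
      x <+: v → x <:+ v → Bordered v := by
  intro n
  induction n with
  | zero =>
    intro x v hn hx _ _ _
    cases x with
    | nil => exact absurd rfl hx
    | cons a x => simp at hn
  | succ n ih =>
    intro x v hn hx hlt hp hs
    by_cases hle : x.length * 2 ≤ v.length
    · obtain ⟨s', hs'⟩ := hs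
      have hs'p : s' <+: v := ⟨x, hs'⟩
      have hxle : x.length ≤ s'.length := by
        have := congrArg List.length hs'
        simp at this
        omega
      obtain ⟨y, hy⟩ := List.prefix_of_prefix_length_le hp hs'p hxle
      exact ⟨x, y, hx, by rw [← hs', ← hy, List.append_assoc]⟩
    · push_neg at hle
      obtain ⟨t, ht⟩ : ∃ t, x ++ t = v := hp
      obtain ⟨s', hs'⟩ : ∃ s', s' ++ x = v := hs
      have hvs : s'.length + x.length = v.length := by
        have := congrArg List.length hs'
        simpa using this
      have hs'len : s'.length < x.length := by omega
      obtain ⟨z, hz⟩ := List.prefix_of_prefix_length_le ⟨x, hs'⟩ ⟨t, ht⟩ (le_of_lt hs'len)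
      -- hz : s' ++ z = x
      have hzlen : z.length = x.length - s'.length := by
        have := congrArg List.length hz
        simp at this
        omega
      have hz_ne : z ≠ [] := by
        intro hcon
        subst hcon
        simp at hzlen
        omega
      have key : s' ++ z = z ++ t := by
        apply List.append_cancel_left (as := s')
        rw [hz, hs', ← ht, ← hz, List.append_assoc]
      have hzx_p : z <+: x := ⟨t, by rw [← hz, key]⟩
      have hzx_s : z <:+ x := ⟨s', hz⟩
      exact ih z v (by omega) hz_ne (by omega) (hzx_p.trans ⟨t, ht⟩) (hzx_s.trans ⟨s', hs'⟩)

/-- the high bit -/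
def hi : Fin 4 → Fin 2 := ![0, 0, 1, 1]

/-- the low bit -/
def lo : Fin 4 → Fin 2 := ![0, 1, 0, 1]

/-- combine two bits into a letter -/
def pr : Fin 2 → Fin 2 → Fin 4 := fun a b => ![![0, 1], ![2, 3]] a b

lemma hi_pr (a b : Fin 2) : hi (pr a b) = a := by fin_cases a <;> fin_cases b <;> rfl
lemma lo_pr (a b : Fin 2) : lo (pr a b) = b := by fin_cases a <;> fin_cases b <;> rfl

lemma h_eq (w : List (Fin 4)) : h w = w.map hi := rfl

lemma g_eq (w : List (Fin 4)) : g w = il (w.map hi) (w.map lo) := by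
  induction w with
  | nil => rfl
  | cons c w ih =>
    show ![[0, 0], [0, 1], [1, 0], [1, 1]] c ++ g w = _
    have hc : ![[0, 0], [0, 1], [1, 0], [1, 1]] c = [hi c, lo c] := by
      fin_cases c <;> rfl
    rw [hc, ih]
    simp [il_cons]

end PPSAux

open PPSAux

/-- `h(g⁻¹(PRIMEPALSTAR))` is the language of nonempty unbordered words over `{0,1}`. -/
theorem image_preimage_primePalstar_eq_unbordered :
    {v : List (Fin 2) | ∃ w : List (Fin 4), IsPrimePalstar (g w) ∧ v = h w}
      = {w : List (Fin 2) | w ≠ [] ∧ ¬ Bordered w} := by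
  ext v
  simp only [Set.mem_setOf_eq]
  constructor
  · rintro ⟨w, ⟨hstar, hne, hnsplit⟩, rfl⟩
    -- g w is in PAL
    obtain ⟨P, r, hP, hPne, hr, hgw⟩ := palstar_first hstar hne
    have hrnil : r = [] := by
      by_contra hrne
      exact hnsplit ⟨P, r, pal_mem_palstar hP, hr, hPne, hrne, hgw⟩
    subst hrnil
    rw [List.append_nil] at hgw
    rw [← hgw] at hP
    -- so g w is an even palindrome
    rw [mem_PAL_iff] at hP
    obtain ⟨-, -, hrev⟩ := hP
    have hwne : w ≠ [] := by
      intro hcon; subst hcon; exact hne rfl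
    have hlen : (w.map hi).length = (w.map lo).length := by simp
    have hgw2 : g w = il (w.map hi) (w.map lo) := g_eq w
    -- palindromicity forces the low bits to be the reversed high bits
    have hforce : w.map lo = (w.map hi).reverse := by
      have h1 : il ((w.map lo).reverse) ((w.map hi).reverse) = il (w.map hi) (w.map lo) := by
        rw [← il_reverse _ _ hlen, ← hgw2, hrev]
      have h2 : ((w.map lo).reverse).length = ((w.map hi).reverse).length := by simp
      obtain ⟨e1, e2⟩ := il_inj _ _ _ _ h2 hlen h1
      rw [← e1]; simp
    refine ⟨?_, ?_⟩
    · rw [h_eq]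
      simp [hwne]
    · rintro ⟨x, y, hx, hb⟩
      rw [h_eq] at hb
      apply hnsplit
      have hrevsplit : (w.map hi).reverse = x.reverse ++ (y.reverse ++ x.reverse) := by
        rw [hb]; simp
      have hsplit : g w = il x x.reverse ++ (il y y.reverse ++ il x x.reverse) := by
        rw [hgw2, hforce, hrevsplit, hb, List.append_assoc,
          il_append x _ _ _ (by simp), il_append y _ _ _ (by simp)]
      have hilx : il x x.reverse ∈ PAL (Fin 2) := il_pal hx
      have hilxne : il x x.reverse ≠ [] := by
        rw [mem_PAL_iff] at hilx
        exact hilx.1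
      refine ⟨il x x.reverse, il y y.reverse ++ il x x.reverse,
        pal_mem_palstar hilx, ?_, hilxne, ?_, hsplit⟩
      · apply palstar_append _ (pal_mem_palstar hilx)
        rcases List.eq_nil_or_concat y with hy | hy
        · subst hy
          simp only [List.reverse_nil, il_nil_left]
          rw [PALSTAR]
          exact Language.nil_mem_kstar _
        · have hyne : y ≠ [] := by
            obtain ⟨l, a, rfl⟩ := hy
            simp
          exact pal_mem_palstar (il_pal hyne)
      · intro hcon
        rcases List.append_eq_nil_iff.mp hcon with ⟨-, h2⟩
        exact hilxne h2
  · rintro ⟨hne, hnb⟩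
    refine ⟨(v.zip v.reverse).map (fun p => pr p.1 p.2), ?_, ?_⟩
    case _ =>
      -- compute h w and g w
      have hmapshi : ((v.zip v.reverse).map (fun p => pr p.1 p.2)).map hi = v := by
        rw [List.map_map]
        have : (hi ∘ fun p : Fin 2 × Fin 2 => pr p.1 p.2) = Prod.fst := by
          funext p; simp [Function.comp, hi_pr]
        rw [this]
        exact List.map_fst_zip (by simp)
      have hmapslo : ((v.zip v.reverse).map (fun p => pr p.1 p.2)).map lo = v.reverse := by
        rw [List.map_map]
        have : (lo ∘ fun p : Fin 2 × Fin 2 => pr p.1 p.2) = Prod.snd := by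
          funext p; simp [Function.comp, lo_pr]
        rw [this]
        exact List.map_snd_zip (by simp)
      have hgw : g ((v.zip v.reverse).map (fun p => pr p.1 p.2)) = il v v.reverse := by
        rw [g_eq, hmapshi, hmapslo]
      rw [hgw]
      have hpal : il v v.reverse ∈ PAL (Fin 2) := il_pal hne
      have hilne : il v v.reverse ≠ [] := (mem_PAL_iff.mp hpal).1
      refine ⟨pal_mem_palstar hpal, hilne, ?_⟩
      rintro ⟨p, q, hp, hq, hpne, hqne, heq⟩
      -- extract the first palindrome factor of p
      obtain ⟨P, r, hP, hPne, -, hpr⟩ := palstar_first hp hpne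
      obtain ⟨z, hz, hPz⟩ := hP
      set n := v.length with hn
      have hlenvr : v.length = v.reverse.length := by simp
      have hslen : (il v v.reverse).length = 2 * n := by
        rw [il_length v v.reverse hlenvr]; omega
      have hzpos : 1 ≤ z.length := List.length_pos_iff.mpr hz
      set j := z.length with hj
      have hplen : p.length + q.length = 2 * n := by
        have := congrArg List.length heq
        rw [hslen] at this
        simp at this
        omega
      have hqpos : 1 ≤ q.length := List.length_pos_iff.mpr hqne
      have hPlen : P.length = 2 * j := by rw [hPz]; simp; omega
      have hPle : P.length ≤ p.length := by
        have := congrArg List.length hpr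
        simp at this
        omega
      have hjn : j < n := by omega
      -- now split il v v.reverse at position 2j
      have hsplit : il v v.reverse =
          il (v.take j) (v.reverse.take j) ++ il (v.drop j) (v.reverse.drop j) := by
        have h0 := il_append (v.take j) (v.reverse.take j) (v.drop j) (v.reverse.drop j)
          (by simp)
        rw [List.take_append_drop, List.take_append_drop] at h0
        exact h0
      have htlen : (v.take j).length = (v.reverse.take j).length := by simp
      have hPfront : P = il (v.take j) (v.reverse.take j) := by
        have h1 : P ++ (r ++ q) =
            il (v.take j) (v.reverse.take j) ++ il (v.drop j) (v.reverse.drop j) := by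
          rw [← hsplit, heq, hpr, List.append_assoc]
        have h2 : P.length = (il (v.take j) (v.reverse.take j)).length := by
          rw [il_length _ _ htlen, hPlen, List.length_take, List.length_take,
            List.length_reverse]
          omega
        exact (List.append_inj h1 h2).1
      -- P is a palindrome, so the two halves are mirror images
      have hPrev : P.reverse = P := by
        rw [hPz]; simp
      have hmirror : v.take j = (v.reverse.take j).reverse := by
        have h1 : il ((v.reverse.take j).reverse) ((v.take j).reverse)
            = il (v.take j) (v.reverse.take j) := by
          rw [← il_reverse _ _ htlen, ← hPfront, hPrev]
        have h2 : ((v.reverse.take j).reverse).length = ((v.take j).reverse).length := by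
          simp
        exact (il_inj _ _ _ _ h2 htlen h1).1.symm
      -- so v.take j is both a prefix and a suffix of v
      apply hnb
      have hxp : v.take j <+: v := List.take_prefix j v
      have hxs : v.take j <:+ v := by
        rw [hmirror]
        have : v.reverse.take j <+: v.reverse := List.take_prefix j v.reverse
        have h2 := List.reverse_suffix.mpr this
        rwa [List.reverse_reverse] at h2
      have hxne : v.take j ≠ [] := by
        intro hcon
        rcases List.take_eq_nil_iff.mp hcon with hcase | hcase
        · exact absurd hcase (by omega)
        · exact hne hcase
      have hxlt : (v.take j).length < v.length := by simp; omega
      exact bordered_of_prefix_suffix (v.take j).length (v.take j) v le_rfl hxne hxlt hxp hxs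
    case _ =>
      rw [h_eq]
      rw [List.map_map]
      have : (hi ∘ fun p : Fin 2 × Fin 2 => pr p.1 p.2) = Prod.fst := by
        funext p; simp [Function.comp, hi_pr]
      rw [this]
      exact (List.map_fst_zip (by simp)).symm
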